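/- If $\phi = \sum_{i=0}^{M} \phi_i T_i$ is a real polynomial expanded in Chebyshev polynomials of the first kind, then its fourth derivative has Chebyshev expansion $\phi'''' = \sum_{i=0}^{M} \phi_i^{(4)} T_i$ with $\phi_i^{(4)} = \tfrac{1}{24 b_i} \sum_{p = i+4,\ p \equiv i\ (\mathrm{mod}\ 2)}^{M} p\big(p^2(p^2-4)^2 - 3p^4 i^2 + 3 p^2 i^4 - i^2(i^2-4)^2\big)\phi_p$, where $b_0 = 2$ and $b_i = 1$ for $i \ge 1$. -/

import Mathlib

open Polynomial Polynomial.Chebyshev Finset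

/-- `b₀ = 2`, `bᵢ = 1` for `i ≥ 1`. -/
noncomputable def bcoef (i : ℕ) : ℝ := if i = 0 then 2 else 1

/-!
Differentiating `T (p + 2) = 2 X T (p + 1) - T p` a total of `k + 1` times gives
`T (p + 2)⁽ᵏ⁺¹⁾ = 2 X T (p + 1)⁽ᵏ⁺¹⁾ + (2k + 2) T (p + 1)⁽ᵏ⁾ - T p⁽ᵏ⁺¹⁾`.
Since `2 X Tᵢ = T (i + 1) + T |i - 1|`, this is a recurrence in `p` for the Chebyshev coefficients
of the `(k + 1)`-st derivatives of the `T p` in terms of those of the `k`-th derivatives.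
For the first four derivatives the coefficients have closed forms, e.g.
`p (p² - i²) (p² - (i - 2)²) (p² - (i + 2)²) / (24 bᵢ)` for the fourth one when `p - i ≥ 4` is
even, and checking the recurrence is a case analysis ending in polynomial identities in `p`
and `i`. The theorem follows by linearity.
-/

section

variable {R : Type*} [CommRing R]

/-- The Chebyshev coefficients of `2 X * ∑ aⱼ Tⱼ`, by `2 X Tⱼ = T (j + 1) + T (j - 1)` and
`T (-1) = T 1`. -/
def twoXMulCoeff (a : ℕ → R) (i : ℕ) : R :=
  (if i = 0 then 0 else a (i - 1)) + a (i + 1) + if i = 1 then a 0 else 0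

theorem two_mul_X_mul_T_natCast (j : ℕ) :
    2 * X * T R j = T R ((j + 1 : ℕ) : ℤ) + T R ((j : ℤ) - 1) := by
  push_cast
  linear_combination (norm := ring_nf) -T_add_one R j

theorem sum_C_mul_T_add_one {m : ℕ} {a : ℕ → R} (ha : a m = 0) :
    ∑ j ∈ range (m + 1), C (a j) * T R ((j + 1 : ℕ) : ℤ) =
      ∑ i ∈ range (m + 1), C (if i = 0 then 0 else a (i - 1)) * T R i := by
  rw [sum_range_succ, sum_range_succ' _ m, ha]
  simp

theorem sum_C_mul_T_sub_one {m : ℕ} {a : ℕ → R} (ha : ∀ i, m ≤ i → a i = 0) :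
    ∑ j ∈ range (m + 1), C (a j) * T R ((j : ℤ) - 1) =
      ∑ i ∈ range (m + 1), C (a (i + 1) + if i = 1 then a 0 else 0) * T R i := by
  simp only [C_add, add_mul, sum_add_distrib]
  rw [sum_range_succ', sum_range_succ _ m, ha (m + 1) (by omega)]
  simp only [apply_ite C, C_0, ite_mul, zero_mul, sum_ite_eq', mem_range]
  push_cast
  simp only [add_sub_cancel_right, T_neg_one, T_one, add_zero]
  split_ifs
  · rfl
  · rw [ha 0 (by omega), C_0, zero_mul]

theorem two_mul_X_mul_sum_C_mul_T {n : ℕ} {a : ℕ → R} (ha : ∀ i, n ≤ i + 1 → a i = 0) :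
    2 * X * ∑ i ∈ range n, C (a i) * T R i = ∑ i ∈ range n, C (twoXMulCoeff a i) * T R i := by
  rcases n with _ | m
  · simp
  calc 2 * X * ∑ i ∈ range (m + 1), C (a i) * T R i
      = ∑ j ∈ range (m + 1), C (a j) * T R ((j + 1 : ℕ) : ℤ)
          + ∑ j ∈ range (m + 1), C (a j) * T R ((j : ℤ) - 1) := by
        rw [mul_sum, ← sum_add_distrib]
        refine sum_congr rfl fun j _ => ?_
        rw [mul_left_comm, two_mul_X_mul_T_natCast, mul_add]
    _ = _ := by
        rw [sum_C_mul_T_add_one (ha m le_rfl), sum_C_mul_T_sub_one fun i hi => ha i (by omega),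
          ← sum_add_distrib]
        simp only [twoXMulCoeff, C_add, add_mul, add_assoc]

theorem C_mul_sum_C_mul_T (r : R) (a : ℕ → R) (N : ℕ) :
    C r * ∑ i ∈ range N, C (a i) * T R i = ∑ i ∈ range N, C (r * a i) * T R i := by
  simp only [mul_sum, Polynomial.C_mul, mul_assoc]

theorem iterate_derivative_succ_two_mul_X_mul (n : ℕ) (q : R[X]) :
    derivative^[n + 1] (2 * X * q) =
      2 * X * derivative^[n + 1] q + C (2 * n + 2 : R) * derivative^[n] q := by
  rw [mul_assoc, ← C_ofNat, iterate_derivative_C_mul, mul_comm X, iterate_derivative_mul_X,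
    nsmul_eq_mul, Nat.add_sub_cancel]
  simp only [map_add, map_mul, map_ofNat, map_natCast, Nat.cast_add, Nat.cast_one]
  ring

theorem T_eq_sum_C_ite_mul_T {p N : ℕ} (hp : p < N) :
    T R p = ∑ i ∈ range N, C (if i = p then 1 else 0) * T R i := by
  simp [apply_ite C, hp]

theorem iterate_derivative_T_eq_sum_of_add_two {k : ℕ} {c c' : ℕ → ℕ → R}
    (hc' : ∀ p N : ℕ, p < N → derivative^[k] (T R p) = ∑ i ∈ range N, C (c' i p) * T R i)
    (hc_zero : ∀ i p, p ≤ i → c i p = 0)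
    (hc_one : C (c 0 1) = derivative^[k + 1] (X : R[X]))
    (hc_add_two : ∀ i p,
      c i (p + 2) = twoXMulCoeff (c · (p + 1)) i + (2 * k + 2) * c' i (p + 1) - c i p)
    (p N : ℕ) (hp : p < N) :
    derivative^[k + 1] (T R p) = ∑ i ∈ range N, C (c i p) * T R i := by
  induction p using Nat.twoStepInduction generalizing N with
  | zero =>
    simp [iterate_derivative_one, hc_zero _ 0 (Nat.zero_le _)]
  | one =>
    rw [sum_eq_single_of_mem 0 (mem_range.2 (by omega)) fun i _ hi => by
      rw [hc_zero i 1 (by omega), C_0, zero_mul]]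
    simp [hc_one]
  | more p ih₁ ih₂ =>
    have hT : T R ((p + 2 : ℕ) : ℤ) = 2 * X * T R ((p + 1 : ℕ) : ℤ) - T R p := by
      push_cast
      exact T_add_two R p
    rw [hT, iterate_derivative_sub, iterate_derivative_succ_two_mul_X_mul,
      ih₂ N (by omega), ih₁ N (by omega), hc' (p + 1) N (by omega),
      two_mul_X_mul_sum_C_mul_T fun i hi => hc_zero i (p + 1) (by omega), C_mul_sum_C_mul_T,
      ← sum_add_distrib, ← sum_sub_distrib]
    refine sum_congr rfl fun i _ => ?_
    rw [hc_add_two, map_sub, map_add]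
    ring

theorem iterate_derivative_sum_C_mul_T {k N : ℕ} {c : ℕ → ℕ → R}
    (hc : ∀ p < N, derivative^[k] (T R p) = ∑ i ∈ range N, C (c i p) * T R i) (φ : ℕ → R) :
    derivative^[k] (∑ p ∈ range N, C (φ p) * T R p) =
      ∑ i ∈ range N, C (∑ p ∈ range N, φ p * c i p) * T R i := by
  calc derivative^[k] (∑ p ∈ range N, C (φ p) * T R p)
      = ∑ p ∈ range N, ∑ i ∈ range N, C (φ p * c i p) * T R i := by
        rw [iterate_derivative_sum]
        refine sum_congr rfl fun p hp => ?_
        rw [iterate_derivative_C_mul, hc p (mem_range.1 hp), C_mul_sum_C_mul_T]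
    _ = _ := by
        rw [sum_comm]
        simp only [map_sum, sum_mul]

end

/-! `derivTCoeffₖ i p` is the coefficient of `T i` in the `k`-th derivative of `T p`. -/

noncomputable def derivTCoeff₁ (i p : ℕ) : ℝ :=
  if i + 1 ≤ p ∧ p % 2 ≠ i % 2 then 2 * p / bcoef i else 0

noncomputable def derivTCoeff₂ (i p : ℕ) : ℝ :=
  if i + 2 ≤ p ∧ p % 2 = i % 2 then p * (p ^ 2 - i ^ 2) / bcoef i else 0

noncomputable def derivTCoeff₃ (i p : ℕ) : ℝ :=
  if i + 3 ≤ p ∧ p % 2 ≠ i % 2 then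
    p * (p ^ 2 - (i - 1 : ℝ) ^ 2) * (p ^ 2 - (i + 1 : ℝ) ^ 2) / (4 * bcoef i)
  else 0

noncomputable def derivTCoeff₄ (i p : ℕ) : ℝ :=
  if i + 4 ≤ p ∧ p % 2 = i % 2 then
    p * (p ^ 2 - i ^ 2) * (p ^ 2 - (i - 2 : ℝ) ^ 2) * (p ^ 2 - (i + 2 : ℝ) ^ 2) / (24 * bcoef i)
  else 0

theorem derivTCoeff₁_add_two (i p : ℕ) :
    derivTCoeff₁ i (p + 2) = twoXMulCoeff (derivTCoeff₁ · (p + 1)) i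
      + 2 * (if i = p + 1 then 1 else 0) - derivTCoeff₁ i p := by
  rcases i with _ | _ | i <;>
    simp only [derivTCoeff₁, twoXMulCoeff, bcoef, Nat.add_sub_cancel] <;> split_ifs <;>
    first
    | (exfalso; omega)
    | (push_cast; ring1)

-- For `k ≥ 2` the identity also has to be checked at the edge `p + 2 = i + k` of the support.
theorem derivTCoeff₂_add_two (i p : ℕ) :
    derivTCoeff₂ i (p + 2) = twoXMulCoeff (derivTCoeff₂ · (p + 1)) i
      + 4 * derivTCoeff₁ i (p + 1) - derivTCoeff₂ i p := by
  rcases i with _ | _ | i <;>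
    simp only [derivTCoeff₂, derivTCoeff₁, twoXMulCoeff, bcoef, Nat.add_sub_cancel] <;>
    split_ifs <;>
    first
    | (exfalso; omega)
    | (push_cast; ring1)
    | ((obtain rfl : p = 0 := by omega); push_cast; ring1)
    | ((obtain rfl : p = 1 := by omega); push_cast; ring1)
    | ((obtain rfl : p = i + 2 := by omega); push_cast; ring1)

theorem derivTCoeff₃_add_two (i p : ℕ) :
    derivTCoeff₃ i (p + 2) = twoXMulCoeff (derivTCoeff₃ · (p + 1)) i
      + 6 * derivTCoeff₂ i (p + 1) - derivTCoeff₃ i p := by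
  rcases i with _ | _ | i <;>
    simp only [derivTCoeff₃, derivTCoeff₂, twoXMulCoeff, bcoef, Nat.add_sub_cancel] <;>
    split_ifs <;>
    first
    | (exfalso; omega)
    | (push_cast; ring1)
    | ((obtain rfl : p = 1 := by omega); push_cast; ring1)
    | ((obtain rfl : p = 2 := by omega); push_cast; ring1)
    | ((obtain rfl : p = i + 3 := by omega); push_cast; ring1)

theorem derivTCoeff₄_add_two (i p : ℕ) :
    derivTCoeff₄ i (p + 2) = twoXMulCoeff (derivTCoeff₄ · (p + 1)) i
      + 8 * derivTCoeff₃ i (p + 1) - derivTCoeff₄ i p := by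
  rcases i with _ | _ | i <;>
    simp only [derivTCoeff₄, derivTCoeff₃, twoXMulCoeff, bcoef, Nat.add_sub_cancel] <;>
    split_ifs <;>
    first
    | (exfalso; omega)
    | (push_cast; ring1)
    | ((obtain rfl : p = 2 := by omega); push_cast; ring1)
    | ((obtain rfl : p = 3 := by omega); push_cast; ring1)
    | ((obtain rfl : p = i + 4 := by omega); push_cast; ring1)

theorem derivative_T_eq_sum_derivTCoeff₁ (p N : ℕ) (hp : p < N) :
    derivative^[1] (T ℝ p) = ∑ i ∈ range N, C (derivTCoeff₁ i p) * T ℝ i :=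
  iterate_derivative_T_eq_sum_of_add_two (c := derivTCoeff₁) (k := 0)
    (fun _ _ hp => T_eq_sum_C_ite_mul_T hp)
    (fun _ _ _ => if_neg (by omega)) (by simp [derivTCoeff₁, bcoef])
    (fun i p => by rw [derivTCoeff₁_add_two]; norm_num) p N hp

theorem iterate_derivative_T_eq_sum_derivTCoeff₂ (p N : ℕ) (hp : p < N) :
    derivative^[2] (T ℝ p) = ∑ i ∈ range N, C (derivTCoeff₂ i p) * T ℝ i :=
  iterate_derivative_T_eq_sum_of_add_two (c := derivTCoeff₂) derivative_T_eq_sum_derivTCoeff₁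
    (fun _ _ _ => if_neg (by omega)) (by simp [derivTCoeff₂, iterate_derivative_X])
    (fun i p => by rw [derivTCoeff₂_add_two]; norm_num) p N hp

theorem iterate_derivative_T_eq_sum_derivTCoeff₃ (p N : ℕ) (hp : p < N) :
    derivative^[3] (T ℝ p) = ∑ i ∈ range N, C (derivTCoeff₃ i p) * T ℝ i :=
  iterate_derivative_T_eq_sum_of_add_two (c := derivTCoeff₃)
    iterate_derivative_T_eq_sum_derivTCoeff₂
    (fun _ _ _ => if_neg (by omega)) (by simp [derivTCoeff₃, iterate_derivative_X])
    (fun i p => by rw [derivTCoeff₃_add_two]; norm_num) p N hp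

theorem iterate_derivative_T_eq_sum_derivTCoeff₄ (p N : ℕ) (hp : p < N) :
    derivative^[4] (T ℝ p) = ∑ i ∈ range N, C (derivTCoeff₄ i p) * T ℝ i :=
  iterate_derivative_T_eq_sum_of_add_two (c := derivTCoeff₄)
    iterate_derivative_T_eq_sum_derivTCoeff₃
    (fun _ _ _ => if_neg (by omega)) (by simp [derivTCoeff₄, iterate_derivative_X])
    (fun i p => by rw [derivTCoeff₄_add_two]; norm_num) p N hp

/-- If `φ = ∑_{i=0}^M φᵢ Tᵢ`, then `φ'''' = ∑_{i=0}^M φᵢ⁽⁴⁾ Tᵢ` with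
`φᵢ⁽⁴⁾ = (1/(24 bᵢ)) ∑_{p=i+4, p ≡ i (mod 2)}^M
  p (p²(p²-4)² - 3p⁴i² + 3p²i⁴ - i²(i²-4)²) φₚ`. -/
theorem chebyshev_fourth_derivative_coeffs (M : ℕ) (φc : ℕ → ℝ) :
    derivative (derivative (derivative (derivative
        (∑ i ∈ range (M + 1), C (φc i) * T ℝ i)))) =
      ∑ i ∈ range (M + 1),
        C ((1 / (24 * bcoef i)) *
            ∑ p ∈ range (M + 1),
              if i + 4 ≤ p ∧ p % 2 = i % 2 then
                (p : ℝ) *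
                  ((p : ℝ) ^ 2 * ((p : ℝ) ^ 2 - 4) ^ 2
                    - 3 * (p : ℝ) ^ 4 * (i : ℝ) ^ 2
                    + 3 * (p : ℝ) ^ 2 * (i : ℝ) ^ 4
                    - (i : ℝ) ^ 2 * ((i : ℝ) ^ 2 - 4) ^ 2) * φc p
              else 0) *
          T ℝ i := by
  show derivative^[4] _ = _
  rw [iterate_derivative_sum_C_mul_T fun p hp => iterate_derivative_T_eq_sum_derivTCoeff₄ p _ hp]
  refine sum_congr rfl fun i _ => ?_
  rw [mul_sum]
  congr 2
  refine sum_congr rfl fun p _ => ?_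
  unfold derivTCoeff₄
  split_ifs <;> ring
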